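/- arXiv:0908.1885 — 3 statements merged into one kernel-verified Lean document; each statement's English description precedes it below -/
import Mathlib

section
/- Let q ≥ 1 and C ≥ 0 be real numbers, and let f : [0,∞) → [0,∞) be a differentiable function satisfying f'(τ) ≤ C·f(τ)^{1−1/q} − 2q·f(τ) for all τ ≥ 0. Then for all τ ≥ 0: f(τ)^{1/q} ≤ C/(2q) + f(0)^{1/q}·exp(−2τ). In particular f(τ)^{1/q} ≤ C/(2q) + f(0)^{1/q} is bounded uniformly in τ. -/
open Real Set

/-- Gage–Hamilton ODE comparison lemma: if `f ≥ 0` satisfies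
`f' ≤ C·f^(1−1/q) − 2q·f` on `[0,∞)`, then
`f(τ)^(1/q) ≤ C/(2q) + f(0)^(1/q)·exp(−2τ)`. -/
theorem gage_hamilton_ode_lemma
    (q C : ℝ) (hq : 1 ≤ q) (hC : 0 ≤ C)
    (f f' : ℝ → ℝ)
    (hnonneg : ∀ τ : ℝ, 0 ≤ τ → 0 ≤ f τ)
    (hderiv : ∀ τ : ℝ, 0 ≤ τ → HasDerivWithinAt f (f' τ) (Ici 0) τ)
    (hineq : ∀ τ : ℝ, 0 ≤ τ → f' τ ≤ C * f τ ^ (1 - 1 / q) - 2 * q * f τ) :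
    ∀ τ : ℝ, 0 ≤ τ →
      f τ ^ (1 / q) ≤ C / (2 * q) + f 0 ^ (1 / q) * Real.exp (-2 * τ) := by
  intro τ hτ
  have hq0 : (0:ℝ) < q := lt_of_lt_of_le one_pos hq
  set p : ℝ := 1 / q with hp_def
  have hp : 0 < p := by positivity
  have hp1 : p ≤ 1 := by
    rw [hp_def, div_le_one hq0]; exact hq
  have hpq : p * q = 1 := by rw [hp_def]; field_simp
  -- Key estimate with regularization ε > 0
  have key : ∀ ε : ℝ, 0 < ε →
      f τ ^ p ≤ C / (2 * q) + ε ^ p + (f 0 + ε) ^ p * Real.exp (-2 * τ) := by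
    intro ε hε
    set K : ℝ := C / (2 * q) + ε ^ p with hK_def
    have hK0 : 0 ≤ K := by positivity
    set h : ℝ → ℝ := fun t => ((f t + ε) ^ p - K) * Real.exp (2 * t) with hh_def
    -- derivative computations
    have hu_pos : ∀ t : ℝ, 0 ≤ t → 0 < f t + ε := fun t ht =>
      add_pos_of_nonneg_of_pos (hnonneg t ht) hε
    have hcont : ContinuousOn h (Ici 0) := by
      intro t ht
      have h1 : HasDerivWithinAt (fun y => (f y + ε) ^ p)
          (f' t * p * (f t + ε) ^ (p - 1)) (Ici 0) t :=
        ((hderiv t ht).add_const ε).rpow_const (Or.inl (hu_pos t ht).ne')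
      exact ((h1.sub_const K).mul
        (((hasDerivAt_id t).const_mul 2).exp.hasDerivWithinAt)).continuousWithinAt
    have hderivh : ∀ x ∈ interior (Ici (0:ℝ)),
        HasDerivAt h
          ((f' x * p * (f x + ε) ^ (p - 1)) * Real.exp (2 * x)
            + ((f x + ε) ^ p - K) * (Real.exp (2 * x) * (2 * 1))) x := by
      intro x hx
      rw [interior_Ici] at hx
      have hx0 : (0:ℝ) ≤ x := le_of_lt hx
      have hfd : HasDerivAt f (f' x) x :=
        (hderiv x hx0).hasDerivAt (Ici_mem_nhds hx)
      have hg : HasDerivAt (fun y => (f y + ε) ^ p)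
          (f' x * p * (f x + ε) ^ (p - 1)) x :=
        (hfd.add_const ε).rpow_const (Or.inl (hu_pos x hx0).ne')
      have hexp : HasDerivAt (fun t => Real.exp (2 * t)) (Real.exp (2 * x) * (2 * 1)) x :=
        ((hasDerivAt_id x).const_mul 2).exp
      exact (hg.sub_const K).mul hexp
    have hanti : AntitoneOn h (Ici 0) := by
      apply antitoneOn_of_deriv_nonpos (convex_Ici 0) hcont
      · intro x hx
        exact (hderivh x hx).differentiableAt.differentiableWithinAt
      · intro x hx
        rw [(hderivh x hx).deriv]
        rw [interior_Ici] at hx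
        have hx0 : (0:ℝ) ≤ x := le_of_lt hx
        set u : ℝ := f x + ε with hu_def
        have hu : 0 < u := hu_pos x hx0
        have hfx : 0 ≤ f x := hnonneg x hx0
        -- core inequality: f' x * p * u^(p-1) + 2*(u^p - K) ≤ 0
        have e1 : f x ^ (1 - p) * u ^ (p - 1) ≤ 1 := by
          have i1 : f x ^ (1 - p) ≤ u ^ (1 - p) :=
            Real.rpow_le_rpow hfx (by simp [hu_def]; linarith) (by linarith)
          calc f x ^ (1 - p) * u ^ (p - 1) ≤ u ^ (1 - p) * u ^ (p - 1) :=
                mul_le_mul_of_nonneg_right i1 (Real.rpow_nonneg hu.le _)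
            _ = 1 := by rw [← Real.rpow_add hu]; simp
        have e2 : u * u ^ (p - 1) = u ^ p := by
          have h2 : u ^ (1 + (p - 1)) = u * u ^ (p - 1) :=
            Real.rpow_one_add' hu.le (by ring_nf; positivity)
          rw [← h2]; congr 1; ring
        have e3 : ε * u ^ (p - 1) ≤ ε ^ p := by
          have i2 : u ^ (p - 1) ≤ ε ^ (p - 1) :=
            Real.rpow_le_rpow_of_nonpos hε (by simp [hu_def]; linarith) (by linarith)
          calc ε * u ^ (p - 1) ≤ ε * ε ^ (p - 1) :=
                mul_le_mul_of_nonneg_left i2 hε.le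
            _ = ε ^ p := by
                have h3 : ε ^ (1 + (p - 1)) = ε * ε ^ (p - 1) :=
                  Real.rpow_one_add' hε.le (by ring_nf; positivity)
                rw [← h3]; congr 1; ring
        have hup : 0 ≤ u ^ (p - 1) := Real.rpow_nonneg hu.le _
        have step1 : f' x * (p * u ^ (p - 1)) ≤
            (C * f x ^ (1 - p) - 2 * q * f x) * (p * u ^ (p - 1)) := by
          apply mul_le_mul_of_nonneg_right _ (by positivity)
          have := hineq x hx0
          rwa [hp_def]
        have step2 : (C * f x ^ (1 - p) - 2 * q * f x) * (p * u ^ (p - 1)) ≤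
            p * C - 2 * u ^ p + 2 * ε ^ p := by
          have hfxu : f x = u - ε := by rw [hu_def]; ring
          have expand : (C * f x ^ (1 - p) - 2 * q * f x) * (p * u ^ (p - 1)) =
              p * C * (f x ^ (1 - p) * u ^ (p - 1))
                - 2 * (q * p) * (u * u ^ (p - 1)) + 2 * (q * p) * (ε * u ^ (p - 1)) := by
            rw [hfxu]; ring
          rw [expand, e2, mul_comm q p, hpq]
          have b1 : p * C * (f x ^ (1 - p) * u ^ (p - 1)) ≤ p * C * 1 :=
            mul_le_mul_of_nonneg_left e1 (by positivity)
          nlinarith [e3]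
        have core : f' x * p * u ^ (p - 1) + 2 * (u ^ p - K) ≤ 0 := by
          have : f' x * p * u ^ (p - 1) ≤ p * C - 2 * u ^ p + 2 * ε ^ p := by
            calc f' x * p * u ^ (p - 1) = f' x * (p * u ^ (p - 1)) := by ring
              _ ≤ _ := le_trans step1 step2
          have hKval : 2 * K = C / q + 2 * ε ^ p := by rw [hK_def]; ring
          have hpC : p * C = C / q := by rw [hp_def]; ring
          clear_value K u p
          linarith
        have hexp_pos : 0 < Real.exp (2 * x) := Real.exp_pos _
        have : (f' x * p * u ^ (p - 1) + 2 * (u ^ p - K)) * Real.exp (2 * x) ≤ 0 :=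
          mul_nonpos_of_nonpos_of_nonneg core hexp_pos.le
        calc f' x * p * u ^ (p - 1) * Real.exp (2 * x)
              + (u ^ p - K) * (Real.exp (2 * x) * (2 * 1))
            = (f' x * p * u ^ (p - 1) + 2 * (u ^ p - K)) * Real.exp (2 * x) := by ring
          _ ≤ 0 := this
    -- apply antitonicity
    have hle : h τ ≤ h 0 := hanti self_mem_Ici hτ hτ
    have h0val : h 0 = (f 0 + ε) ^ p - K := by simp [hh_def]
    have hmul : ((f τ + ε) ^ p - K) * (Real.exp (2 * τ) * Real.exp (-2 * τ))
        ≤ ((f 0 + ε) ^ p - K) * Real.exp (-2 * τ) := by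
      rw [← mul_assoc]
      have := mul_le_mul_of_nonneg_right hle (Real.exp_pos (-2 * τ)).le
      rw [h0val] at this
      exact this
    rw [← Real.exp_add] at hmul
    have heq : (2:ℝ) * τ + -2 * τ = 0 := by ring
    rw [heq, Real.exp_zero, mul_one] at hmul
    have hfin : (f τ + ε) ^ p ≤ K + (f 0 + ε) ^ p * Real.exp (-2 * τ) := by
      have hKexp : 0 ≤ K * Real.exp (-2 * τ) := by positivity
      nlinarith [hmul]
    have hmono : f τ ^ p ≤ (f τ + ε) ^ p :=
      Real.rpow_le_rpow (hnonneg τ hτ) (by linarith) hp.le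
    calc f τ ^ p ≤ (f τ + ε) ^ p := hmono
      _ ≤ K + (f 0 + ε) ^ p * Real.exp (-2 * τ) := hfin
      _ = C / (2 * q) + ε ^ p + (f 0 + ε) ^ p * Real.exp (-2 * τ) := by rw [hK_def]
  -- limit ε → 0⁺
  have t1 : Filter.Tendsto (fun ε : ℝ => ε ^ p) (nhdsWithin 0 (Ioi 0)) (nhds 0) := by
    have := (Real.continuousAt_rpow_const 0 p (Or.inr hp.le)).tendsto
    rw [Real.zero_rpow hp.ne'] at this
    exact this.mono_left nhdsWithin_le_nhds
  have t2 : Filter.Tendsto (fun ε : ℝ => (f 0 + ε) ^ p) (nhdsWithin 0 (Ioi 0))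
      (nhds (f 0 ^ p)) := by
    have hadd : Filter.Tendsto (fun ε : ℝ => f 0 + ε) (nhdsWithin 0 (Ioi 0)) (nhds (f 0)) := by
      have : Filter.Tendsto (fun ε : ℝ => f 0 + ε) (nhds 0) (nhds (f 0 + 0)) :=
        (continuous_const.add continuous_id).tendsto 0
      rw [add_zero] at this
      exact this.mono_left nhdsWithin_le_nhds
    exact ((Real.continuousAt_rpow_const (f 0) p (Or.inr hp.le)).tendsto).comp hadd
  have hlim : Filter.Tendsto
      (fun ε : ℝ => C / (2 * q) + ε ^ p + (f 0 + ε) ^ p * Real.exp (-2 * τ))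
      (nhdsWithin 0 (Ioi 0))
      (nhds (C / (2 * q) + 0 + f 0 ^ p * Real.exp (-2 * τ))) :=
    (Filter.Tendsto.add tendsto_const_nhds t1).add (t2.mul tendsto_const_nhds)
  have := ge_of_tendsto hlim (eventually_nhdsWithin_of_forall fun ε hε => key ε hε)
  linarith
end

section
/- Let α, β, C be real numbers with α > 0, β > 0, C ≥ 0 and α ≠ β, and let f : [0,∞) → ℝ be a differentiable function satisfying f'(τ) ≤ −α·f(τ) + C·exp(−β·τ) for all τ ≥ 0. Then for all τ ≥ 0: f(τ) ≤ (f(0) − C/(α−β))·exp(−α·τ) + (C/(α−β))·exp(−β·τ). -/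
open Real Set

/-- Gage–Hamilton exponential decay lemma, case `α ≠ β`: if
`f' ≤ −α·f + C·exp(−β·τ)` on `[0,∞)`, then
`f(τ) ≤ (f(0) − C/(α−β))·exp(−α·τ) + (C/(α−β))·exp(−β·τ)`. -/
theorem gage_hamilton_decay_lemma_ne
    (α β C : ℝ) (hα : 0 < α) (hβ : 0 < β) (hC : 0 ≤ C) (hne : α ≠ β)
    (f f' : ℝ → ℝ)
    (hderiv : ∀ τ : ℝ, 0 ≤ τ → HasDerivWithinAt f (f' τ) (Ici 0) τ)
    (hineq : ∀ τ : ℝ, 0 ≤ τ → f' τ ≤ -α * f τ + C * Real.exp (-β * τ)) :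
    ∀ τ : ℝ, 0 ≤ τ →
      f τ ≤ (f 0 - C / (α - β)) * Real.exp (-α * τ)
              + (C / (α - β)) * Real.exp (-β * τ) := by
  have hab : α - β ≠ 0 := sub_ne_zero.mpr hne
  set K := C / (α - β) with hK
  set g : ℝ → ℝ := fun x => Real.exp (α * x) * f x - K * Real.exp ((α - β) * x) with hg
  set g' : ℝ → ℝ := fun x => α * Real.exp (α * x) * f x + Real.exp (α * x) * f' x
      - K * (Real.exp ((α - β) * x) * (α - β)) with hg'
  have hgderiv : ∀ x ∈ Ici (0:ℝ), HasDerivWithinAt g (g' x) (Ici 0) x := by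
    intro x hx
    have h1 : HasDerivWithinAt (fun y => Real.exp (α * y)) (α * Real.exp (α * x)) (Ici 0) x := by
      simpa [mul_comm] using (((hasDerivAt_id x).const_mul α).exp).hasDerivWithinAt
    have h2 : HasDerivWithinAt (fun y => Real.exp ((α - β) * y))
        (Real.exp ((α - β) * x) * (α - β)) (Ici 0) x := by
      simpa using (((hasDerivAt_id x).const_mul (α - β)).exp).hasDerivWithinAt
    exact (h1.mul (hderiv x hx)).sub (h2.const_mul K)
  have hg'le : ∀ x ∈ interior (Ici (0:ℝ)), g' x ≤ 0 := by
    intro x hx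
    rw [interior_Ici] at hx
    have hx0 : (0:ℝ) ≤ x := le_of_lt hx
    have h := hineq x hx0
    have hKab : K * (α - β) = C := div_mul_cancel₀ C hab
    have : g' x ≤ α * Real.exp (α * x) * f x + Real.exp (α * x) * (-α * f x + C * Real.exp (-β * x))
        - K * (Real.exp ((α - β) * x) * (α - β)) := by
      have := mul_le_mul_of_nonneg_left h (Real.exp_pos (α * x)).le
      simp only [hg']
      linarith
    calc g' x ≤ _ := this
      _ = Real.exp (α * x) * Real.exp (-β * x) * C
          - K * (α - β) * Real.exp ((α - β) * x) := by ring
      _ = 0 := by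
          rw [← Real.exp_add, hKab]
          ring_nf
  have hganti : AntitoneOn g (Ici 0) := by
    apply antitoneOn_of_hasDerivWithinAt_nonpos (convex_Ici 0)
      (fun x hx => (hgderiv x hx).continuousWithinAt)
      (fun x hx => (hgderiv x (interior_subset hx)).mono interior_subset) hg'le
  intro τ hτ
  have hgle : g τ ≤ g 0 := hganti (self_mem_Ici) hτ hτ
  simp only [hg, mul_zero, Real.exp_zero, one_mul] at hgle
  -- g τ ≤ f 0 - K
  have hE : (0:ℝ) < Real.exp (α * τ) := Real.exp_pos _
  have key : Real.exp (α * τ) * f τ ≤ f 0 - K + K * Real.exp ((α - β) * τ) := by linarith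
  have := mul_le_mul_of_nonneg_left key (Real.exp_pos (-α * τ)).le
  have hEE : Real.exp (-α * τ) * Real.exp (α * τ) = 1 := by
    rw [← Real.exp_add]; ring_nf; exact Real.exp_zero
  have hEE2 : Real.exp (-α * τ) * Real.exp ((α - β) * τ) = Real.exp (-β * τ) := by
    rw [← Real.exp_add]; ring_nf
  calc f τ = Real.exp (-α * τ) * Real.exp (α * τ) * f τ := by rw [hEE]; ring
    _ ≤ Real.exp (-α * τ) * (f 0 - K + K * Real.exp ((α - β) * τ)) := by
        rw [mul_assoc]; exact this
    _ = (f 0 - K) * Real.exp (-α * τ) + K * (Real.exp (-α * τ) * Real.exp ((α - β) * τ)) := by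
        ring
    _ = _ := by rw [hEE2]
end

section
/- Let p ≥ 1 be a real number. Let k̃ : ℝ × [0,∞) → ℝ be a smooth function, 2π-periodic in its first (angular) variable θ, with k̃(θ,τ) > 0 everywhere, satisfying the rescaled curve-shortening equation ∂k̃/∂τ = p·k̃^{1+1/p}·∂²k̃/∂θ² + p·k̃^{2+1/p} − p·k̃ on ℝ × (0,∞), and suppose sup_θ |k̃(θ,τ) − 1| → 0 as τ → ∞. Then for every odd positive integer n there exists a constant C(n,p) > 0, depending only on n, p and the initial data k̃(·,0), such that ∫₀^{2π} (∂k̃/∂θ)^{n+1} dθ ≤ C(n,p) for all τ ≥ 0. -/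
open Real Filter Set



noncomputable section

/-- The open upper half plane (in the second coordinate). -/
private def UU : Set (ℝ × ℝ) := univ ×ˢ Ioi (0:ℝ)

private lemma isOpen_UU : IsOpen UU := isOpen_univ.prod isOpen_Ioi

private lemma mem_UU {θ τ : ℝ} (hτ : 0 < τ) : (θ, τ) ∈ UU := ⟨trivial, hτ⟩

private lemma periodic_deriv {f : ℝ → ℝ} {c : ℝ} (hf : Function.Periodic f c) :
    Function.Periodic (deriv f) c := by
  intro x
  have : (fun y => f (y + c)) = f := funext fun y => hf y
  calc deriv f (x + c) = deriv (fun y => f (y + c)) x := by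
        rw [deriv_comp_add_const]
    _ = deriv f x := by rw [this]

section helpers

variable {G : ℝ × ℝ → ℝ}

private lemma contDiffAt_of_UU (hG : ContDiffOn ℝ (⊤:ℕ∞) G UU) {θ τ : ℝ} (hτ : 0 < τ) :
    ContDiffAt ℝ (⊤:ℕ∞) G (θ, τ) :=
  hG.contDiffAt (isOpen_UU.mem_nhds (mem_UU hτ))

/-- θ-slice derivative on the open set. -/
private lemma hasDerivAt_slice1 (hG : ContDiffOn ℝ (⊤:ℕ∞) G UU) {θ τ : ℝ} (hτ : 0 < τ) :
    HasDerivAt (fun x => G (x, τ)) (fderiv ℝ G (θ, τ) (1, 0)) θ := by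
  have hd : HasFDerivAt G (fderiv ℝ G (θ, τ)) (θ, τ) :=
    ((contDiffAt_of_UU hG hτ).differentiableAt (by simp)).hasFDerivAt
  have hline : HasDerivAt (fun x : ℝ => (x, τ)) ((1:ℝ), (0:ℝ)) θ := by
    simpa using (hasDerivAt_id θ).prodMk (hasDerivAt_const θ τ)
  exact hd.comp_hasDerivAt θ hline

/-- τ-slice derivative on the open set. -/
private lemma hasDerivAt_slice2 (hG : ContDiffOn ℝ (⊤:ℕ∞) G UU) {θ τ : ℝ} (hτ : 0 < τ) :
    HasDerivAt (fun s => G (θ, s)) (fderiv ℝ G (θ, τ) (0, 1)) τ := by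
  have hd : HasFDerivAt G (fderiv ℝ G (θ, τ)) (θ, τ) :=
    ((contDiffAt_of_UU hG hτ).differentiableAt (by simp)).hasFDerivAt
  have hline : HasDerivAt (fun s : ℝ => (θ, s)) ((0:ℝ), (1:ℝ)) τ := by
    simpa using (hasDerivAt_const τ θ).prodMk (hasDerivAt_id τ)
  exact hd.comp_hasDerivAt τ hline

/-- the partial derivative in direction `v` is smooth on `UU`. -/
private lemma contDiffOn_partial (hG : ContDiffOn ℝ (⊤:ℕ∞) G UU) (v : ℝ × ℝ) :
    ContDiffOn ℝ (⊤:ℕ∞) (fun q => fderiv ℝ G q v) UU := by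
  have h1 : ContDiffOn ℝ (⊤:ℕ∞) (fderiv ℝ G) UU := by
    have := hG.fderiv_of_isOpen isOpen_UU (m := (⊤:ℕ∞)) (by simp)
    exact this
  exact h1.clm_apply contDiffOn_const

/-- Clairaut's theorem on `UU`. -/
private lemma clairaut (hG : ContDiffOn ℝ (⊤:ℕ∞) G UU) {θ τ : ℝ} (hτ : 0 < τ) :
    fderiv ℝ (fun q => fderiv ℝ G q (1, 0)) (θ, τ) (0, 1)
      = fderiv ℝ (fun q => fderiv ℝ G q (0, 1)) (θ, τ) (1, 0) := by
  have hat : ContDiffAt ℝ (⊤:ℕ∞) G (θ, τ) := contDiffAt_of_UU hG hτ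
  have hsym : IsSymmSndFDerivAt ℝ G (θ, τ) := hat.isSymmSndFDerivAt (by simpa using (WithTop.coe_le_coe.mpr (le_top : (2:ℕ∞) ≤ ⊤)) : minSmoothness ℝ 2 ≤ ((⊤:ℕ∞):WithTop ℕ∞))
  have hdd : HasFDerivAt (fderiv ℝ G) (fderiv ℝ (fderiv ℝ G) (θ, τ)) (θ, τ) := by
    have : ContDiffAt ℝ ((⊤:ℕ∞):WithTop ℕ∞) (fderiv ℝ G) (θ, τ) :=
      ContDiffAt.fderiv_right (contDiffAt_of_UU hG hτ) (m := ((⊤:ℕ∞):WithTop ℕ∞)) (by simp)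
    exact (this.differentiableAt (by simp)).hasFDerivAt
  have key : ∀ v w : ℝ × ℝ,
      fderiv ℝ (fun q => fderiv ℝ G q v) (θ, τ) w = fderiv ℝ (fderiv ℝ G) (θ, τ) w v := by
    intro v w
    have hcomp : HasFDerivAt (fun q => fderiv ℝ G q v)
        ((ContinuousLinearMap.apply ℝ ℝ v).comp (fderiv ℝ (fderiv ℝ G) (θ, τ))) (θ, τ) :=
      (ContinuousLinearMap.apply ℝ ℝ v).hasFDerivAt.comp (θ, τ) hdd
    rw [hcomp.fderiv]
    rfl
  rw [key, key, hsym.eq]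

/-- The closed half plane. -/
private lemma uniqueDiffOn_SS : UniqueDiffOn ℝ ((univ : Set ℝ) ×ˢ Ici (0:ℝ)) :=
  uniqueDiffOn_univ.prod (uniqueDiffOn_Ici 0)

private lemma mem_SS {θ τ : ℝ} (hτ : 0 ≤ τ) : (θ, τ) ∈ (univ : Set ℝ) ×ˢ Ici (0:ℝ) :=
  ⟨trivial, hτ⟩

/-- θ-slice derivative up to the boundary, in terms of `fderivWithin`. -/
private lemma hasDerivAt_slice1' (hG : ContDiffOn ℝ ((⊤:ℕ∞):WithTop ℕ∞) G ((univ : Set ℝ) ×ˢ Ici (0:ℝ)))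
    {θ τ : ℝ} (hτ : 0 ≤ τ) :
    HasDerivAt (fun x => G (x, τ))
      (fderivWithin ℝ G ((univ : Set ℝ) ×ˢ Ici (0:ℝ)) (θ, τ) (1, 0)) θ := by
  have hd : HasFDerivWithinAt G
      (fderivWithin ℝ G ((univ : Set ℝ) ×ˢ Ici (0:ℝ)) (θ, τ))
      ((univ : Set ℝ) ×ˢ Ici (0:ℝ)) (θ, τ) :=
    ((hG.differentiableOn (by
      simpa using (WithTop.coe_le_coe.mpr ((by simp) : (1:ℕ∞) ≤ ⊤)))) _ (mem_SS hτ)).hasFDerivWithinAt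
  have hline : HasDerivWithinAt (fun x : ℝ => (x, τ)) ((1:ℝ), (0:ℝ)) univ θ :=
    ((hasDerivAt_id θ).prodMk (hasDerivAt_const θ τ)).hasDerivWithinAt
  have := hd.comp_hasDerivWithinAt θ hline (fun x _ => mem_SS hτ)
  rw [hasDerivWithinAt_univ] at this
  exact this

private lemma continuousOn_partialWithin
    (hG : ContDiffOn ℝ ((⊤:ℕ∞):WithTop ℕ∞) G ((univ : Set ℝ) ×ˢ Ici (0:ℝ))) (v : ℝ × ℝ) :
    ContinuousOn (fun q => fderivWithin ℝ G ((univ : Set ℝ) ×ˢ Ici (0:ℝ)) q v)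
      ((univ : Set ℝ) ×ˢ Ici (0:ℝ)) := by
  have h := hG.continuousOn_fderivWithin uniqueDiffOn_SS
    (by simpa using (WithTop.coe_le_coe.mpr ((by simp) : (1:ℕ∞) ≤ ⊤)))
  exact (ContinuousLinearMap.apply ℝ ℝ v).continuous.comp_continuousOn h

private lemma hasDerivAt_int (hF : ContDiffOn ℝ ((⊤:ℕ∞):WithTop ℕ∞) G UU) (n : ℕ)
    {τ₀ : ℝ} (hτ₀ : 0 < τ₀) :
    HasDerivAt (fun τ => ∫ θ in (0:ℝ)..(2 * Real.pi), (fderiv ℝ G (θ, τ) (1, 0)) ^ (n + 1))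
      (∫ θ in (0:ℝ)..(2 * Real.pi), ((n:ℝ) + 1) * (fderiv ℝ G (θ, τ₀) (1, 0)) ^ n
        * (fderiv ℝ (fun q => fderiv ℝ G q (1, 0)) (θ, τ₀) (0, 1))) τ₀ := by
  set F1 : ℝ × ℝ → ℝ := fun q => fderiv ℝ G q (1, 0) with hF1def
  have hF1 : ContDiffOn ℝ ((⊤:ℕ∞):WithTop ℕ∞) F1 UU := contDiffOn_partial hF _
  have hF1c : ContinuousOn F1 UU := hF1.continuousOn
  have hF12c : ContinuousOn (fun q => fderiv ℝ F1 q (0, 1)) UU :=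
    (contDiffOn_partial hF1 _).continuousOn
  set ε : ℝ := τ₀ / 2 with hεdef
  have hε : 0 < ε := by positivity
  set Q : Set (ℝ × ℝ) := (uIcc (0:ℝ) (2 * Real.pi)) ×ˢ (Icc (τ₀ - ε) (τ₀ + ε)) with hQdef
  have hQU : Q ⊆ UU := by
    rintro ⟨θ, τ⟩ ⟨-, hτ⟩
    exact mem_UU (by have h := hτ.1; simp only [hεdef] at h; linarith)
  have hQc : IsCompact Q := isCompact_uIcc.prod isCompact_Icc
  have hGcont : ContinuousOn
      (fun q => ((n:ℝ) + 1) * (F1 q) ^ n * fderiv ℝ F1 q (0, 1)) Q :=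
    ((continuousOn_const.mul ((hF1c.mono hQU).pow n)).mul (hF12c.mono hQU))
  obtain ⟨M, hM⟩ := hQc.exists_bound_of_continuousOn hGcont
  have hslice : ∀ x : ℝ, 0 < x → Continuous fun θ => F1 (θ, x) := by
    intro x hx
    exact hF1c.comp_continuous (continuous_id.prodMk continuous_const)
      (fun θ => mem_UU hx)
  have hball : ∀ x ∈ Metric.ball τ₀ ε, 0 < x ∧ x ∈ Icc (τ₀ - ε) (τ₀ + ε) := by
    intro x hx
    rw [Metric.mem_ball, Real.dist_eq, abs_lt] at hx
    constructor
    · simp only [hεdef] at hx ⊢; linarith [hx.1]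
    · constructor <;> linarith [hx.1, hx.2]
  have key := intervalIntegral.hasDerivAt_integral_of_dominated_loc_of_deriv_le
    (F := fun τ θ => (F1 (θ, τ)) ^ (n + 1))
    (F' := fun τ θ => ((n:ℝ) + 1) * (F1 (θ, τ)) ^ n * fderiv ℝ F1 (θ, τ) (0, 1))
    (x₀ := τ₀) (a := (0:ℝ)) (b := 2 * Real.pi) (bound := fun _ => M)
    (μ := MeasureTheory.volume) (Metric.ball_mem_nhds τ₀ hε)
    ?hmeas ?hint ?hmeas' ?hbound ?hbint ?hdiff
  · exact key.2
  · filter_upwards [isOpen_Ioi.eventually_mem hτ₀] with x hx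
    exact (((hslice x hx).pow (n + 1)).aestronglyMeasurable).restrict
  · exact (((hslice τ₀ hτ₀).pow (n + 1))).intervalIntegrable _ _
  · have : Continuous fun θ =>
        ((n:ℝ) + 1) * (F1 (θ, τ₀)) ^ n * fderiv ℝ F1 (θ, τ₀) (0, 1) := by
      have h2 : Continuous fun θ => fderiv ℝ F1 (θ, τ₀) (0, 1) :=
        hF12c.comp_continuous (continuous_id.prodMk continuous_const)
          (fun θ => mem_UU hτ₀)
      exact (continuous_const.mul ((hslice τ₀ hτ₀).pow n)).mul h2
    exact this.aestronglyMeasurable.restrict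
  · apply MeasureTheory.ae_of_all
    intro θ hθ x hx
    have hθ' : θ ∈ uIcc (0:ℝ) (2 * Real.pi) := Ioc_subset_Icc_self hθ
    exact hM (θ, x) ⟨hθ', (hball x hx).2⟩
  · exact intervalIntegrable_const
  · apply MeasureTheory.ae_of_all
    intro θ hθ x hx
    have hx0 : 0 < x := (hball x hx).1
    have h1 : HasDerivAt (fun s => F1 (θ, s)) (fderiv ℝ F1 (θ, x) (0, 1)) x :=
      hasDerivAt_slice2 hF1 hx0
    have h2 := h1.pow (n + 1)
    simpa [Pi.pow_def] using h2

end helpers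

end



private lemma barrier {f f' : ℝ → ℝ} {T M : ℝ}
    (hd : ∀ t ∈ Ici T, HasDerivAt f (f' t) t)
    (hM : ∀ t ∈ Ici T, M < f t → f' t < 0) :
    ∀ t ∈ Ici T, f t ≤ max (f T) M := by
  intro t ht
  by_contra hcon
  push_neg at hcon
  set A := max (f T) M with hA
  have hTt : T < t := by
    rcases lt_or_eq_of_le (mem_Ici.mp ht) with h | h
    · exact h
    · exact absurd hcon (by rw [← h]; simp [hA, le_max_left])
  have hcont : ∀ r ∈ Icc T t, ContinuousAt f r := fun r hr =>
    (hd r hr.1).continuousAt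
  set S' : Set ℝ := {r | r ∈ Icc T t ∧ f r ≤ A} with hS'
  have hne : S'.Nonempty := ⟨T, ⟨le_refl T, hTt.le⟩, le_max_left _ _⟩
  have hbdd : BddAbove S' := ⟨t, fun r hr => hr.1.2⟩
  have hclosed : IsClosed S' := by
    rw [← isOpen_compl_iff, isOpen_iff_mem_nhds]
    intro x hx
    by_cases hxI : x ∈ Icc T t
    · have hfx : A < f x := by
        by_contra hle
        exact hx ⟨hxI, le_of_not_gt hle⟩
      filter_upwards [(hcont x hxI).eventually (eventually_gt_nhds hfx)] with y hy hyS'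
      exact absurd hyS'.2 (not_le.mpr hy)
    · filter_upwards [isClosed_Icc.isOpen_compl.eventually_mem hxI] with y hy hyS'
      exact hy hyS'.1
  set s := sSup S' with hs
  have hsS' : s ∈ S' := hclosed.csSup_mem hne hbdd
  have hsT : T ≤ s := hsS'.1.1
  have hst : s < t := by
    rcases lt_or_eq_of_le hsS'.1.2 with h | h
    · exact h
    · exact absurd (h ▸ hsS'.2) (not_le.mpr hcon)
  have habove : ∀ r, s < r → r ≤ t → A < f r := by
    intro r h1 h2
    by_contra hle
    have : r ∈ S' := ⟨⟨hsT.trans h1.le, h2⟩, le_of_not_gt hle⟩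
    exact absurd (le_csSup hbdd this) (not_le.mpr h1)
  have hanti : StrictAntiOn f (Icc s t) := by
    apply strictAntiOn_of_deriv_neg (convex_Icc s t)
    · intro r hr
      exact ((hd r (hsT.trans hr.1)).continuousAt).continuousWithinAt
    · intro r hr
      rw [interior_Icc] at hr
      rw [(hd r (hsT.trans hr.1.le)).deriv]
      exact hM r (hsT.trans hr.1.le) ((le_max_right _ _).trans_lt (habove r hr.1 hr.2.le))
  have : f t < f s := hanti ⟨le_refl s, hst.le⟩ ⟨hst.le, le_refl t⟩ hst
  exact absurd hcon (not_lt.mpr ((this.le).trans hsS'.2))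

private lemma inner_ineq {δ b₁ h e w : ℝ} (hδ0 : 0 ≤ δ) (hb1 : 1/2 ≤ b₁)
    (hh : |h| ≤ 8*δ) (he : |e| ≤ δ) :
    0 ≤ b₁ * w^2 + w * h + w * e + 65 * δ^2 := by
  obtain ⟨hh1, hh2⟩ := abs_le.mp hh
  obtain ⟨he1, he2⟩ := abs_le.mp he
  have hw2 : 0 ≤ w^2 := sq_nonneg w
  have hb1w : w^2/2 ≤ b₁ * w^2 := by nlinarith
  rcases le_or_gt 0 w with hw | hw
  · have h1 : -(8*δ)*w ≤ w * h := by nlinarith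
    have h2 : -δ*w ≤ w * e := by nlinarith
    nlinarith [sq_nonneg (w - 9*δ)]
  · have h1 : 8*δ*w ≤ w * h := by nlinarith
    have h2 : δ*w ≤ w * e := by nlinarith
    nlinarith [sq_nonneg (w + 9*δ)]

private lemma integral_deriv_periodic_zero' {g g' : ℝ → ℝ}
    (hg : ∀ x, HasDerivAt g (g' x) x) (hgper : Function.Periodic g (2 * π))
    (hg'c : Continuous g') :
    ∫ x in (0:ℝ)..(2 * π), g' x = 0 := by
  have hdg : deriv g = g' := funext fun x => (hg x).deriv
  have h1 : ∫ x in (0:ℝ)..(2 * π), deriv g x = g (2 * π) - g 0 :=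
    intervalIntegral.integral_deriv_eq_sub (fun x _ => (hg x).differentiableAt)
      (by rw [hdg]; exact hg'c.intervalIntegrable _ _)
  rw [hdg] at h1
  rw [h1]
  have := hgper 0
  rw [zero_add] at this
  rw [this, sub_self]

private lemma rpow_facts {p δ b : ℝ} (hp : 1 ≤ p) (hδ0 : 0 ≤ δ) (hδ4 : δ ≤ 1/4)
    (hb : |b - 1| ≤ δ) :
    1/2 ≤ b ^ (1 + 1/p) ∧ |b ^ (2 + 1/p) - b| ≤ 8 * δ := by
  have hp0 : 0 < p := lt_of_lt_of_le one_pos hp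
  have hip0 : 0 < 1/p := by positivity
  have hip1 : 1/p ≤ 1 := by
    rw [div_le_one hp0]; exact hp
  obtain ⟨hb1, hb2⟩ := abs_le.mp hb
  have hbl : (3:ℝ)/4 ≤ b := by linarith
  have hbu : b ≤ (5:ℝ)/4 := by linarith
  have hb0 : (0:ℝ) < b := by linarith
  constructor
  · have h1 : ((3:ℝ)/4) ^ ((2:ℝ)) ≤ ((3:ℝ)/4) ^ (1 + 1/p) :=
      rpow_le_rpow_of_exponent_ge (by norm_num) (by norm_num) (by linarith)
    have h2 : ((3:ℝ)/4) ^ (1 + 1/p) ≤ b ^ (1 + 1/p) :=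
      rpow_le_rpow (by norm_num) hbl (by positivity)
    have h3 : ((3:ℝ)/4 : ℝ) ^ ((2:ℝ)) = 9/16 := by
      rw [show ((2:ℝ)) = ((2:ℕ):ℝ) by norm_num, rpow_natCast]; norm_num
    linarith
  · -- mean value estimate for x ↦ x^(2+1/p) - x on [3/4, 5/4]
    set q : ℝ := 2 + 1/p with hq
    have hq1 : (1:ℝ) ≤ q := by rw [hq]; linarith
    have hder : ∀ x ∈ Icc ((3:ℝ)/4) ((5:ℝ)/4),
        HasDerivWithinAt (fun y : ℝ => y ^ q - y) (q * x ^ (q - 1) - 1)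
          (Icc ((3:ℝ)/4) ((5:ℝ)/4)) x := by
      intro x hx
      have hx0 : x ≠ 0 := by intro h; rw [h] at hx; exact absurd hx.1 (by norm_num)
      exact ((Real.hasDerivAt_rpow_const (Or.inl hx0)).sub (hasDerivAt_id x)).hasDerivWithinAt
    have hbound : ∀ x ∈ Icc ((3:ℝ)/4) ((5:ℝ)/4), ‖q * x ^ (q - 1) - 1‖ ≤ 8 := by
      intro x hx
      have hx0 : (0:ℝ) < x := lt_of_lt_of_le (by norm_num) hx.1
      have hq2 : q - 1 = 1 + 1/p := by rw [hq]; ring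
      have h1 : x ^ (q-1) ≤ ((5:ℝ)/4) ^ (q-1) :=
        rpow_le_rpow (le_of_lt hx0) hx.2 (by rw [hq2]; positivity)
      have h2 : ((5:ℝ)/4) ^ (q-1) ≤ ((5:ℝ)/4) ^ ((2:ℝ)) :=
        rpow_le_rpow_of_exponent_le (by norm_num) (by rw [hq2]; linarith)
      have h3 : ((5:ℝ)/4 : ℝ) ^ ((2:ℝ)) = 25/16 := by
        rw [show ((2:ℝ)) = ((2:ℕ):ℝ) by norm_num, rpow_natCast]; norm_num
      have h4 : (0:ℝ) ≤ x ^ (q-1) := (rpow_nonneg (le_of_lt hx0) _)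
      have hq3 : q ≤ 3 := by rw [hq]; linarith
      have hq0 : (0:ℝ) ≤ q := by linarith
      rw [Real.norm_eq_abs, abs_le]
      constructor
      · nlinarith
      · nlinarith
    have hconv := (convex_Icc ((3:ℝ)/4) ((5:ℝ)/4)).norm_image_sub_le_of_norm_hasDerivWithin_le
      hder hbound (by constructor <;> norm_num : (1:ℝ) ∈ Icc ((3:ℝ)/4) ((5:ℝ)/4))
      (⟨hbl, hbu⟩ : b ∈ Icc ((3:ℝ)/4) ((5:ℝ)/4))
    have h1 : (1:ℝ) ^ q - 1 = 0 := by rw [Real.one_rpow]; ring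
    rw [Real.norm_eq_abs, Real.norm_eq_abs, h1, sub_zero] at hconv
    calc |b ^ q - b| ≤ 8 * |b - 1| := hconv
      _ ≤ 8 * δ := by linarith [abs_le.mpr ⟨hb1, hb2⟩]

private lemma key_est {p δ : ℝ} {n : ℕ} (hodd : Odd n) (hp : 1 ≤ p)
    (hδ0 : 0 ≤ δ) (hδ4 : δ ≤ 1/4) (hδn : 65 * (n:ℝ) * δ^2 ≤ 1/2)
    {k u w v vθ : ℝ → ℝ}
    (hk : ∀ x, HasDerivAt k (u x) x)
    (hu : ∀ x, HasDerivAt u (w x) x)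
    (hv : ∀ x, HasDerivAt v (vθ x) x)
    (huc : Continuous u) (hwc : Continuous w)
    (hvc : Continuous v) (hvθc : Continuous vθ)
    (hkper : Function.Periodic k (2 * π)) (huper : Function.Periodic u (2 * π))
    (hvper : Function.Periodic v (2 * π))
    (hpde' : ∀ x, v x = p * (k x) ^ ((1:ℝ) + 1/p) * w x + p * (k x) ^ ((2:ℝ) + 1/p) - p * k x)
    (hclose : ∀ x, |k x - 1| ≤ δ) :
    (∫ x in (0:ℝ)..(2 * π), ((n:ℝ) + 1) * (u x) ^ n * vθ x)
      ≤ -(((n:ℝ) + 1) * p / 2) * (∫ x in (0:ℝ)..(2 * π), (u x) ^ (n + 1))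
        + 130 * π * (n:ℝ) * ((n:ℝ) + 1) * p * δ^2 := by
  obtain ⟨a, rfl⟩ := hodd
  set m : ℕ := 2 * a + 1 with hm
  have hp0 : 0 < p := lt_of_lt_of_le one_pos hp
  have hπ : 0 < π := pi_pos
  have hab : (0:ℝ) ≤ 2 * π := by positivity
  have hkc : Continuous k := Differentiable.continuous (fun x => (hk x).differentiableAt)
  have intg : ∀ {g : ℝ → ℝ}, Continuous g →
      IntervalIntegrable g MeasureTheory.volume 0 (2 * π) :=
    fun hg => hg.intervalIntegrable _ _
  set J1 := ∫ x in (0:ℝ)..(2 * π), (u x) ^ (2 * a) * w x * v x with hJ1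
  set J2 := ∫ x in (0:ℝ)..(2 * π), (u x) ^ (2 * a) * w x * (k x - 1) with hJ2
  set f0 := ∫ x in (0:ℝ)..(2 * π), (u x) ^ (m + 1) with hf0
  set B := ∫ x in (0:ℝ)..(2 * π), (u x) ^ (2 * a) with hB
  have cU2a : Continuous fun x => (u x) ^ (2 * a) := huc.pow _
  have cUm : Continuous fun x => (u x) ^ m := huc.pow _
  have cUm1 : Continuous fun x => (u x) ^ (m + 1) := huc.pow _
  -- derivative of u^m
  have hpow : ∀ x, HasDerivAt (fun y => (u y) ^ m) ((m:ℝ) * (u x) ^ (2 * a) * w x) x := by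
    intro x
    have h1 := (hu x).pow m
    simpa [hm, Pi.pow_def] using h1
  -- Step L1
  have hg1 : ∀ x, HasDerivAt (fun y => ((m:ℝ) + 1) * (u y) ^ m * v y)
      ((((m:ℝ) + 1) * (m:ℝ)) * ((u x) ^ (2 * a) * w x * v x)
        + ((m:ℝ) + 1) * (u x) ^ m * vθ x) x := by
    intro x
    have h2 : HasDerivAt (fun y => ((m:ℝ) + 1) * (u y) ^ m * v y) _ x := ((hpow x).const_mul ((m:ℝ) + 1)).mul (hv x)
    convert h2 using 1
    ring
  have hper1 : Function.Periodic (fun y => ((m:ℝ) + 1) * (u y) ^ m * v y) (2 * π) := by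
    intro x
    simp only [huper x, hvper x]
  have hc1a : Continuous fun x => (((m:ℝ) + 1) * (m:ℝ)) * ((u x) ^ (2 * a) * w x * v x) :=
    continuous_const.mul ((cU2a.mul hwc).mul hvc)
  have hc1b : Continuous fun x => ((m:ℝ) + 1) * (u x) ^ m * vθ x :=
    (continuous_const.mul cUm).mul hvθc
  have hzero1 := integral_deriv_periodic_zero' hg1 hper1 (hc1a.add hc1b)
  rw [intervalIntegral.integral_add (intg hc1a) (intg hc1b),
    intervalIntegral.integral_const_mul] at hzero1
  have hL1 : (∫ x in (0:ℝ)..(2 * π), ((m:ℝ) + 1) * (u x) ^ m * vθ x)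
      = -((((m:ℝ) + 1) * (m:ℝ)) * J1) := by
    rw [← hJ1] at hzero1
    linarith
  -- Step L2
  have hg2 : ∀ x, HasDerivAt (fun y => (u y) ^ m * (k y - 1))
      ((m:ℝ) * ((u x) ^ (2 * a) * w x * (k x - 1)) + (u x) ^ (m + 1)) x := by
    intro x
    have h2 : HasDerivAt (fun y => (u y) ^ m * (k y - 1)) _ x := (hpow x).mul ((hk x).sub_const 1)
    convert h2 using 1
    ring
  have hper2 : Function.Periodic (fun y => (u y) ^ m * (k y - 1)) (2 * π) := by
    intro x
    simp only [huper x, hkper x]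
  have hc2a : Continuous fun x => (m:ℝ) * ((u x) ^ (2 * a) * w x * (k x - 1)) :=
    continuous_const.mul ((cU2a.mul hwc).mul (hkc.sub continuous_const))
  have hzero2 := integral_deriv_periodic_zero' hg2 hper2 (hc2a.add cUm1)
  rw [intervalIntegral.integral_add (intg hc2a) (intg cUm1),
    intervalIntegral.integral_const_mul] at hzero2
  have hL2 : (m:ℝ) * J2 = -f0 := by
    rw [← hJ2, ← hf0] at hzero2
    linarith
  -- pointwise inequality, integrated
  have hptw : ∀ x ∈ Icc (0:ℝ) (2 * π),
      -(((m:ℝ) + 1) * (m:ℝ)) * ((u x) ^ (2 * a) * w x * v x)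
        ≤ (((m:ℝ) + 1) * p * (m:ℝ)) * ((u x) ^ (2 * a) * w x * (k x - 1))
          + (65 * (m:ℝ) * ((m:ℝ) + 1) * p * δ^2) * (u x) ^ (2 * a) := by
    intro x _
    obtain ⟨hb1, hb2⟩ := rpow_facts hp hδ0 hδ4 (hclose x)
    have hX : (0:ℝ) ≤ (u x) ^ (2 * a) := by
      rw [pow_mul]
      exact pow_nonneg (sq_nonneg _) a
    have hinner := inner_ineq hδ0 hb1 hb2 (hclose x) (w := w x)
    have hfac : (0:ℝ) ≤ (((m:ℝ) + 1) * (m:ℝ) * p) * (u x) ^ (2 * a) := by positivity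
    have hprod := mul_nonneg hfac hinner
    rw [hpde' x]
    nlinarith [hprod]
  have hlhsc : Continuous fun x =>
      -(((m:ℝ) + 1) * (m:ℝ)) * ((u x) ^ (2 * a) * w x * v x) :=
    continuous_const.mul ((cU2a.mul hwc).mul hvc)
  have hrhsc1 : Continuous fun x =>
      (((m:ℝ) + 1) * p * (m:ℝ)) * ((u x) ^ (2 * a) * w x * (k x - 1)) :=
    continuous_const.mul ((cU2a.mul hwc).mul (hkc.sub continuous_const))
  have hrhsc2 : Continuous fun x => (65 * (m:ℝ) * ((m:ℝ) + 1) * p * δ^2) * (u x) ^ (2 * a) :=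
    continuous_const.mul cU2a
  have hIP := intervalIntegral.integral_mono_on hab (intg hlhsc)
    (intg (hrhsc1.add hrhsc2)) hptw
  simp only [Pi.add_apply] at hIP
  rw [intervalIntegral.integral_const_mul,
    intervalIntegral.integral_add (intg hrhsc1) (intg hrhsc2),
    intervalIntegral.integral_const_mul, intervalIntegral.integral_const_mul,
    ← hJ1, ← hJ2, ← hB] at hIP
  -- B ≤ 2π + f0
  have hBf : B ≤ 2 * π + f0 := by
    have hpt : ∀ x ∈ Icc (0:ℝ) (2 * π), (u x) ^ (2 * a) ≤ 1 + (u x) ^ (m + 1) := by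
      intro x _
      have hX : (0:ℝ) ≤ (u x) ^ (2 * a) := by
        rw [pow_mul]
        exact pow_nonneg (sq_nonneg _) a
      have hm1 : (u x) ^ (m + 1) = (u x) ^ (2 * a) * (u x) ^ 2 := by
        rw [hm, ← pow_add]
      rcases le_or_gt ((u x) ^ 2) 1 with h | h
      · have h1 : (u x) ^ (2 * a) ≤ 1 := by
          rw [pow_mul]
          exact pow_le_one₀ (sq_nonneg _) h
        have h2 : (0:ℝ) ≤ (u x) ^ (m + 1) := by
          rw [hm1]
          exact mul_nonneg hX (sq_nonneg _)
        linarith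
      · have h1 : (u x) ^ (2 * a) ≤ (u x) ^ (2 * a) * (u x) ^ 2 :=
          le_mul_of_one_le_right hX h.le
        rw [hm1]
        linarith
    have h2 := intervalIntegral.integral_mono_on hab (intg cU2a)
      (intg (continuous_const.add cUm1)) hpt
    simp only [Pi.add_apply] at h2
    rw [intervalIntegral.integral_add (intg continuous_const) (intg cUm1),
      intervalIntegral.integral_const, ← hf0, ← hB] at h2
    simpa using h2
  have hf0nn : (0:ℝ) ≤ f0 := by
    rw [hf0]
    apply intervalIntegral.integral_nonneg hab
    intro x _
    have : m + 1 = 2 * (a + 1) := by rw [hm]; ring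
    rw [this, pow_mul]
    exact pow_nonneg (sq_nonneg _) _
  -- assemble
  rw [hL1]
  have hmul : (((m:ℝ) + 1) * p * (m:ℝ)) * J2 = -(((m:ℝ) + 1) * p * f0) := by
    have : (((m:ℝ) + 1) * p * (m:ℝ)) * J2 = (((m:ℝ) + 1) * p) * ((m:ℝ) * J2) := by ring
    rw [this, hL2]
    ring
  have hc2nn : (0:ℝ) ≤ 65 * (m:ℝ) * ((m:ℝ) + 1) * p * δ^2 := by positivity
  have hstep : -((((m:ℝ) + 1) * (m:ℝ)) * J1)
      ≤ -(((m:ℝ) + 1) * p * f0) + (65 * (m:ℝ) * ((m:ℝ) + 1) * p * δ^2) * (2 * π + f0) := by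
    have h3 : (65 * (m:ℝ) * ((m:ℝ) + 1) * p * δ^2) * B
        ≤ (65 * (m:ℝ) * ((m:ℝ) + 1) * p * δ^2) * (2 * π + f0) :=
      mul_le_mul_of_nonneg_left hBf hc2nn
    calc -((((m:ℝ) + 1) * (m:ℝ)) * J1)
        ≤ (((m:ℝ) + 1) * p * (m:ℝ)) * J2 + (65 * (m:ℝ) * ((m:ℝ) + 1) * p * δ^2) * B := by
          linarith [hIP]
      _ ≤ -(((m:ℝ) + 1) * p * f0) + (65 * (m:ℝ) * ((m:ℝ) + 1) * p * δ^2) * (2 * π + f0) := by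
          rw [hmul] at *
          linarith
  have hfinal : -(((m:ℝ) + 1) * p * f0) + (65 * (m:ℝ) * ((m:ℝ) + 1) * p * δ^2) * (2 * π + f0)
      ≤ -(((m:ℝ) + 1) * p / 2) * f0 + 130 * π * (m:ℝ) * ((m:ℝ) + 1) * p * δ^2 := by
    have h65 : 65 * (m:ℝ) * δ^2 ≤ 1/2 := hδn
    have hm1nn : (0:ℝ) ≤ (m:ℝ) + 1 := by positivity
    nlinarith [mul_nonneg (mul_nonneg hm1nn hp0.le) hf0nn,
      mul_le_mul_of_nonneg_left h65 (mul_nonneg (mul_nonneg hm1nn hp0.le) hf0nn)]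
  linarith


/-- The general `L^(n+1)` bound from the proof of Lemma 3.1: for every odd
positive integer `n`, `∫ (k̃')^(n+1)` is bounded uniformly in time. -/
theorem first_derivative_Lnplus1_bound
    (p : ℝ) (hp : 1 ≤ p) (K : ℝ → ℝ → ℝ)
    (hsmooth : ContDiffOn ℝ (⊤ : ℕ∞) (fun q : ℝ × ℝ => K q.1 q.2) (univ ×ˢ Ici 0))
    (hper : ∀ τ : ℝ, Function.Periodic (fun θ => K θ τ) (2 * π))
    (hpos : ∀ θ τ : ℝ, 0 ≤ τ → 0 < K θ τ)
    (hpde : ∀ θ : ℝ, ∀ τ ∈ Ioi (0:ℝ),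
      deriv (fun s => K θ s) τ =
        p * K θ τ ^ (1 + 1 / p) * deriv (deriv (fun x => K x τ)) θ
          + p * K θ τ ^ (2 + 1 / p) - p * K θ τ)
    (hconv : TendstoUniformly (fun τ θ => K θ τ) (fun _ => 1) atTop) :
    ∀ n : ℕ, Odd n → 0 < n → ∃ C : ℝ, 0 < C ∧ ∀ τ : ℝ, 0 ≤ τ →
      (∫ θ in (0:ℝ)..(2 * π), (deriv (fun x => K x τ) θ) ^ (n + 1)) ≤ C := by
  intro n hodd hn
  have hπ : (0:ℝ) < π := pi_pos
  have hab : (0:ℝ) ≤ 2 * π := by positivity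
  have hp0 : 0 < p := lt_of_lt_of_le one_pos hp
  have hn1 : (1:ℝ) ≤ (n:ℝ) := by exact_mod_cast hn
  set F : ℝ × ℝ → ℝ := fun q => K q.1 q.2 with hFdef
  have hFS : ContDiffOn ℝ ((⊤:ℕ∞):WithTop ℕ∞) F ((univ : Set ℝ) ×ˢ Ici (0:ℝ)) :=
    hsmooth.of_le (by simp)
  have hFU : ContDiffOn ℝ ((⊤:ℕ∞):WithTop ℕ∞) F UU := by
    apply hFS.mono
    rintro ⟨θ, τ⟩ ⟨h1, h2⟩
    exact ⟨h1, le_of_lt (mem_Ioi.mp h2)⟩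
  have hF1 : ContDiffOn ℝ ((⊤:ℕ∞):WithTop ℕ∞) (fun q => fderiv ℝ F q (1, 0)) UU :=
    contDiffOn_partial hFU _
  have hF2 : ContDiffOn ℝ ((⊤:ℕ∞):WithTop ℕ∞) (fun q => fderiv ℝ F q (0, 1)) UU :=
    contDiffOn_partial hFU _
  -- slice identities on the open half-plane
  have hu_eq : ∀ (θ τ : ℝ), 0 < τ →
      deriv (fun x => K x τ) θ = fderiv ℝ F (θ, τ) (1, 0) := by
    intro θ τ hτ
    exact (hasDerivAt_slice1 hFU hτ).deriv
  -- choice of δ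
  set δ : ℝ := min (1/4) (1/(130 * (n:ℝ))) with hδdef
  have hδ0 : 0 < δ := by
    apply lt_min (by norm_num)
    positivity
  have hδ4 : δ ≤ 1/4 := min_le_left _ _
  have hδn : 65 * (n:ℝ) * δ^2 ≤ 1/2 := by
    have h1 : δ ≤ 1/(130 * (n:ℝ)) := min_le_right _ _
    have h2 : δ^2 ≤ (1/4) * (1/(130 * (n:ℝ))) := by
      rw [sq]
      exact mul_le_mul hδ4 h1 hδ0.le (by norm_num)
    have hn0 : (n:ℝ) ≠ 0 := by positivity
    have h4 : 65*(n:ℝ)*δ^2 ≤ 65*(n:ℝ)*((1/4)*(1/(130*(n:ℝ)))) :=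
      mul_le_mul_of_nonneg_left h2 (by positivity)
    have h5 : 65*(n:ℝ)*((1/4)*(1/(130*(n:ℝ)))) = 1/8 := by
      field_simp
      ring
    linarith
  -- choice of T
  rw [Metric.tendstoUniformly_iff] at hconv
  obtain ⟨T₀, hT₀⟩ := (eventually_atTop.mp (hconv δ hδ0))
  set T : ℝ := max T₀ 1 with hTdef
  have hT1 : (1:ℝ) ≤ T := le_max_right _ _
  have hT0 : (0:ℝ) ≤ T := by linarith
  have hclose : ∀ τ : ℝ, T ≤ τ → ∀ θ : ℝ, |K θ τ - 1| ≤ δ := by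
    intro τ hτ θ
    have := hT₀ τ (le_trans (le_max_left _ _) hτ) θ
    rw [Real.dist_eq, abs_sub_comm] at this
    exact this.le
  set Φ : ℝ → ℝ :=
    fun σ => ∫ θ in (0:ℝ)..(2 * π), (deriv (fun x => K x σ) θ) ^ (n + 1) with hΦdef
  set Ψ : ℝ → ℝ := fun σ => ∫ θ in (0:ℝ)..(2 * π),
    ((n:ℝ) + 1) * (fderiv ℝ F (θ, σ) (1, 0)) ^ n
      * (fderiv ℝ (fun q => fderiv ℝ F q (1, 0)) (θ, σ) (0, 1)) with hΨdef
  -- the derivative of Φ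
  have hΦderiv : ∀ τ ∈ Ici T, HasDerivAt Φ (Ψ τ) τ := by
    intro τ hτ
    have hτ0 : 0 < τ := lt_of_lt_of_le one_pos (le_trans hT1 hτ)
    have h0 := hasDerivAt_int hFU n hτ0
    apply h0.congr_of_eventuallyEq
    filter_upwards [isOpen_Ioi.eventually_mem hτ0] with τ' hτ'
    apply intervalIntegral.integral_congr
    intro θ _
    show deriv (fun x => K x τ') θ ^ (n + 1)
      = (fderiv ℝ F (θ, τ')) (1, 0) ^ (n + 1)
    rw [hu_eq θ τ' hτ']
  -- constants for the barrier argument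
  set γ : ℝ := ((n:ℝ) + 1) * p / 2 with hγdef
  set d : ℝ := 130 * π * (n:ℝ) * ((n:ℝ) + 1) * p * δ^2 with hddef
  have hγ0 : 0 < γ := by rw [hγdef]; positivity
  have hd0 : 0 ≤ d := by rw [hddef]; positivity
  set M : ℝ := (d + 1) / γ with hMdef
  have hM0 : 0 < M := by rw [hMdef]; positivity
  -- the barrier condition
  have hbar : ∀ τ ∈ Ici T, M < Φ τ → Ψ τ < 0 := by
    intro τ hτIci hMΦ
    have hτ0 : 0 < τ := lt_of_lt_of_le one_pos (le_trans hT1 hτIci)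
    have hkey : Ψ τ ≤ -γ * Φ τ + d := by
      have hτIoi : τ ∈ Ioi (0:ℝ) := mem_Ioi.mpr hτ0
      have hk' : ∀ x : ℝ, HasDerivAt (fun y => K y τ) (fderiv ℝ F (x, τ) (1, 0)) x :=
        fun _ => hasDerivAt_slice1 hFU hτ0
      have hu' : ∀ x : ℝ, HasDerivAt (fun y => fderiv ℝ F (y, τ) (1, 0))
          (fderiv ℝ (fun q => fderiv ℝ F q (1, 0)) (x, τ) (1, 0)) x :=
        fun _ => hasDerivAt_slice1 hF1 hτ0
      have hv' : ∀ x : ℝ, HasDerivAt (fun y => fderiv ℝ F (y, τ) (0, 1))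
          (fderiv ℝ (fun q => fderiv ℝ F q (1, 0)) (x, τ) (0, 1)) x := by
        intro x
        have h := hasDerivAt_slice1 hF2 hτ0 (θ := x)
        rwa [← clairaut hFU hτ0] at h
      have hcF1 : Continuous fun x => fderiv ℝ F (x, τ) (1, 0) :=
        hF1.continuousOn.comp_continuous (continuous_id.prodMk continuous_const)
          (fun _ => mem_UU hτ0)
      have hcF2 : Continuous fun x => fderiv ℝ F (x, τ) (0, 1) :=
        hF2.continuousOn.comp_continuous (continuous_id.prodMk continuous_const)
          (fun _ => mem_UU hτ0)
      have hcF11 : Continuous fun x => fderiv ℝ (fun q => fderiv ℝ F q (1, 0)) (x, τ) (1, 0) :=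
        (contDiffOn_partial hF1 (1, 0)).continuousOn.comp_continuous
          (continuous_id.prodMk continuous_const) (fun _ => mem_UU hτ0)
      have hcF12 : Continuous fun x => fderiv ℝ (fun q => fderiv ℝ F q (1, 0)) (x, τ) (0, 1) :=
        (contDiffOn_partial hF1 (0, 1)).continuousOn.comp_continuous
          (continuous_id.prodMk continuous_const) (fun _ => mem_UU hτ0)
      have hueq' : ∀ x : ℝ, fderiv ℝ F (x, τ) (1, 0) = deriv (fun y => K y τ) x :=
        fun x => (hu_eq x τ hτ0).symm
      have huper : Function.Periodic (fun x => fderiv ℝ F (x, τ) (1, 0)) (2 * π) := by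
        intro x
        show (fderiv ℝ F (x + 2 * π, τ)) (1, 0) = (fderiv ℝ F (x, τ)) (1, 0)
        rw [hueq', hueq']
        exact periodic_deriv (hper τ) x
      have hveq : ∀ x : ℝ, fderiv ℝ F (x, τ) (0, 1) = deriv (fun s => K x s) τ :=
        fun x => ((hasDerivAt_slice2 hFU hτ0).deriv).symm
      have hvper : Function.Periodic (fun x => fderiv ℝ F (x, τ) (0, 1)) (2 * π) := by
        intro x
        show (fderiv ℝ F (x + 2 * π, τ)) (0, 1) = (fderiv ℝ F (x, τ)) (0, 1)
        rw [hveq, hveq]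
        have hKeq : (fun s => K (x + 2 * π) s) = fun s => K x s :=
          funext fun s => hper s x
        rw [hKeq]
      have hw_eq : ∀ x : ℝ, deriv (deriv (fun y => K y τ)) x
          = fderiv ℝ (fun q => fderiv ℝ F q (1, 0)) (x, τ) (1, 0) := by
        intro x
        have h1 : deriv (fun y => K y τ) = fun y => fderiv ℝ F (y, τ) (1, 0) :=
          funext fun y => hu_eq y τ hτ0
        rw [h1]
        exact (hasDerivAt_slice1 hF1 hτ0).deriv
      have hpde' : ∀ x : ℝ, fderiv ℝ F (x, τ) (0, 1)
          = p * (K x τ) ^ ((1:ℝ) + 1/p)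
              * (fderiv ℝ (fun q => fderiv ℝ F q (1, 0)) (x, τ) (1, 0))
            + p * (K x τ) ^ ((2:ℝ) + 1/p) - p * K x τ := by
        intro x
        rw [hveq x, hpde x τ hτIoi, hw_eq x]
      have hclose' : ∀ x : ℝ, |K x τ - 1| ≤ δ := hclose τ (mem_Ici.mp hτIci)
      have hKE := key_est hodd hp hδ0.le hδ4 hδn hk' hu' hv' hcF1 hcF11 hcF2 hcF12
        (hper τ) huper hvper hpde' hclose'
      have hfeq : (∫ x in (0:ℝ)..(2 * π), (fderiv ℝ F (x, τ) (1, 0)) ^ (n + 1)) = Φ τ := by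
        apply intervalIntegral.integral_congr
        intro θ _
        show (fderiv ℝ F (θ, τ)) (1, 0) ^ (n + 1) = deriv (fun x => K x τ) θ ^ (n + 1)
        rw [hu_eq θ τ hτ0]
      calc Ψ τ ≤ -(((n:ℝ) + 1) * p / 2)
            * (∫ x in (0:ℝ)..(2 * π), (fderiv ℝ F (x, τ) (1, 0)) ^ (n + 1))
          + 130 * π * (n:ℝ) * ((n:ℝ) + 1) * p * δ^2 := hKE
        _ = -γ * Φ τ + d := by rw [hfeq]
    have h2 : γ * M < γ * Φ τ := mul_lt_mul_of_pos_left hMΦ hγ0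
    rw [hMdef, mul_div_cancel₀ _ (ne_of_gt hγ0)] at h2
    calc Ψ τ ≤ -γ * Φ τ + d := hkey
      _ < -(d + 1) + d := by nlinarith
      _ < 0 := by linarith
  -- bound on the compact piece [0, T]
  obtain ⟨M₀, hM₀⟩ : ∃ M₀ : ℝ, ∀ q ∈ (uIcc (0:ℝ) (2*π)) ×ˢ (Icc (0:ℝ) T),
      ‖fderivWithin ℝ F ((univ : Set ℝ) ×ˢ Ici (0:ℝ)) q (1, 0)‖ ≤ M₀ := by
    apply (isCompact_uIcc.prod isCompact_Icc).exists_bound_of_continuousOn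
    apply (continuousOn_partialWithin hFS (1,0)).mono
    rintro ⟨θ, τ⟩ ⟨-, h2⟩
    exact ⟨trivial, h2.1⟩
  have hM₀0 : 0 ≤ M₀ := le_trans (norm_nonneg _)
    (hM₀ (0, 0) ⟨left_mem_uIcc, ⟨le_refl 0, hT0⟩⟩)
  have hC1 : ∀ τ ∈ Icc (0:ℝ) T, Φ τ ≤ 2 * π * (M₀ + 1) ^ (n + 1) := by
    intro τ hτ
    have hueq : ∀ θ : ℝ, deriv (fun x => K x τ) θ
        = fderivWithin ℝ F ((univ : Set ℝ) ×ˢ Ici (0:ℝ)) (θ, τ) (1, 0) :=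
      fun θ => (hasDerivAt_slice1' hFS hτ.1).deriv
    have hcont : Continuous fun θ =>
        fderivWithin ℝ F ((univ : Set ℝ) ×ˢ Ici (0:ℝ)) (θ, τ) (1, 0) :=
      (continuousOn_partialWithin hFS (1,0)).comp_continuous
        (continuous_id.prodMk continuous_const) (fun θ => mem_SS hτ.1)
    have hptw : ∀ θ ∈ Icc (0:ℝ) (2*π),
        (deriv (fun x => K x τ) θ) ^ (n + 1) ≤ (M₀ + 1) ^ (n + 1) := by
      intro θ hθ
      have h1 : |deriv (fun x => K x τ) θ| ≤ M₀ + 1 := by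
        rw [hueq θ]
        have := hM₀ (θ, τ) ⟨Icc_subset_uIcc hθ, hτ⟩
        rw [Real.norm_eq_abs] at this
        linarith
      calc (deriv (fun x => K x τ) θ) ^ (n + 1)
          ≤ |deriv (fun x => K x τ) θ| ^ (n + 1) := by
            exact le_abs_self _ |>.trans (by rw [abs_pow])
        _ ≤ (M₀ + 1) ^ (n + 1) := pow_le_pow_left₀ (abs_nonneg _) h1 _
    have hint : IntervalIntegrable (fun θ => (deriv (fun x => K x τ) θ) ^ (n + 1))
        MeasureTheory.volume 0 (2*π) := by
      have : Continuous fun θ => (deriv (fun x => K x τ) θ) ^ (n + 1) := by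
        have heq : (fun θ => (deriv (fun x => K x τ) θ) ^ (n + 1))
            = fun θ => (fderivWithin ℝ F ((univ : Set ℝ) ×ˢ Ici (0:ℝ)) (θ, τ) (1, 0)) ^ (n+1) :=
          funext fun θ => by rw [hueq θ]
        rw [heq]
        exact hcont.pow _
      exact this.intervalIntegrable _ _
    have := intervalIntegral.integral_mono_on hab hint intervalIntegrable_const hptw
    calc Φ τ ≤ ∫ _ in (0:ℝ)..(2*π), (M₀ + 1) ^ (n + 1) := this
      _ = 2 * π * (M₀ + 1) ^ (n + 1) := by
        rw [intervalIntegral.integral_const, smul_eq_mul]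
        ring
  -- conclusion
  have hbarrier := barrier hΦderiv hbar
  refine ⟨max (2 * π * (M₀ + 1) ^ (n + 1)) M + 1, ?_, ?_⟩
  · have h1 : (0:ℝ) < M := hM0
    have h2 : M ≤ max (2 * π * (M₀ + 1) ^ (n + 1)) M := le_max_right _ _
    linarith
  · intro τ hτ0'
    rcases le_or_gt τ T with h | h
    · have := hC1 τ ⟨hτ0', h⟩
      have h2 : 2 * π * (M₀ + 1) ^ (n + 1) ≤ max (2 * π * (M₀ + 1) ^ (n + 1)) M :=
        le_max_left _ _
      calc (∫ θ in (0:ℝ)..(2 * π), (deriv (fun x => K x τ) θ) ^ (n + 1)) = Φ τ := rfl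
        _ ≤ 2 * π * (M₀ + 1) ^ (n + 1) := this
        _ ≤ max (2 * π * (M₀ + 1) ^ (n + 1)) M + 1 := by linarith
    · have h1 := hbarrier τ (mem_Ici.mpr h.le)
      have h2 := hC1 T ⟨hT0, le_refl T⟩
      have h3 : max (Φ T) M ≤ max (2 * π * (M₀ + 1) ^ (n + 1)) M :=
        max_le_max h2 (le_refl M)
      calc (∫ θ in (0:ℝ)..(2 * π), (deriv (fun x => K x τ) θ) ^ (n + 1)) = Φ τ := rfl
        _ ≤ max (Φ T) M := h1
        _ ≤ max (2 * π * (M₀ + 1) ^ (n + 1)) M + 1 := by linarith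
end
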